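/- arXiv:1508.00173 — 8 statements merged into one kernel-verified Lean document; each statement's English description precedes it below -/
import Mathlib

section
/- Let D be a division ring and K a field with an injective ring homomorphism ι : K → D such that D, viewed as a right K-vector space via right multiplication by ι(k), is finite-dimensional of dimension d. Fix a positive integer n, a right K-linear isomorphism g : Dⁿ → K^(nd) (where Dⁿ carries the right K-vector space structure), and for A ∈ Mₙ(D) let f(A) ∈ M_{nd}(K) denote the matrix (with respect to g) of the right K-linear endomorphism v ↦ A·v of Dⁿ. Then for every λ ∈ K, there exists a nonzero vector v ∈ Dⁿ with A·v = v·ι(λ) (i.e., ι(λ) is a right eigenvalue of A) if and only if λ is a root of the characteristic polynomial of the matrix f(A) ∈ M_{nd}(K). -/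
/-- Let `D` be a division ring and `K` a field with an injective ring
homomorphism `ι : K → D` such that `D`, viewed as a right `K`-vector space via right
multiplication by `ι k` (encoded by a `Module K D` instance with `k • x = x * ι k`),
is finite-dimensional of dimension `d`.  Fix `n > 0`, a right `K`-linear isomorphism
`g : Dⁿ ≃ K^(nd)`, and let `B = f(A)` be the matrix of the `K`-linear endomorphism
`v ↦ A·v` of `Dⁿ` with respect to `g`, i.e. `g (A·v) = B·(g v)` for all `v`.
Then for `λ ∈ K`: `ι λ` is a right eigenvalue of `A` (there is a nonzero `v ∈ Dⁿ` with
`A·v = v·(ι λ)`) if and only if `λ` is a root of the characteristic polynomial of `B`. -/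
theorem right_eigenvalue_iff_root_charpoly
    {K D : Type*} [Field K] [DivisionRing D] (ι : K →+* D)
    (hι : Function.Injective ι)
    [Module K D] (hsmul : ∀ (k : K) (x : D), k • x = x * ι k)
    (d : ℕ) (hd : Module.finrank K D = d)
    (n : ℕ) (hn : 0 < n)
    (g : (Fin n → D) ≃ₗ[K] (Fin (n * d) → K))
    (A : Matrix (Fin n) (Fin n) D)
    (B : Matrix (Fin (n * d)) (Fin (n * d)) K)
    (hB : ∀ v : Fin n → D, g (A.mulVec v) = B.mulVec (g v))
    (lam : K) :
    (∃ v : Fin n → D, v ≠ 0 ∧ A.mulVec v = fun i => v i * ι lam) ↔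
      (Matrix.charpoly B).IsRoot lam := by
  have key : ∀ v : Fin n → D, (A.mulVec v = fun i => v i * ι lam) ↔ A.mulVec v = lam • v := by
    intro v
    have : (fun i => v i * ι lam) = lam • v := by
      funext i; simp [hsmul]
    rw [this]
  -- Step 1: reduce to eigenvector of B
  have step1 : (∃ v : Fin n → D, v ≠ 0 ∧ A.mulVec v = fun i => v i * ι lam) ↔
      ∃ w : Fin (n * d) → K, w ≠ 0 ∧ B.mulVec w = lam • w := by
    constructor
    · rintro ⟨v, hv0, hv⟩
      rw [key] at hv
      refine ⟨g v, fun h => hv0 (by simpa using congrArg g.symm h), ?_⟩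
      rw [← hB, hv, map_smul]
    · rintro ⟨w, hw0, hw⟩
      refine ⟨g.symm w, fun h => hw0 (by simpa using congrArg g h), ?_⟩
      rw [key]
      apply g.injective
      rw [hB, map_smul]
      simp [hw]
  rw [step1]
  -- Step 2: eigenvector of B iff root of charpoly
  have hdet : Polynomial.eval lam (Matrix.charpoly B)
      = (lam • (1 : Matrix (Fin (n*d)) (Fin (n*d)) K) - B).det := by
    rw [Matrix.charpoly, ← Polynomial.coe_evalRingHom, RingHom.map_det]
    congr 1
    ext i j
    by_cases h : i = j <;>
      simp [Matrix.charmatrix, Matrix.one_apply, h, Matrix.diagonal_apply]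
  constructor
  · rintro ⟨w, hw0, hw⟩
    have : (lam • (1 : Matrix (Fin (n*d)) (Fin (n*d)) K) - B).mulVec w = 0 := by
      simp [Matrix.sub_mulVec, Matrix.smul_mulVec, hw]
    have hdz := (Matrix.exists_mulVec_eq_zero_iff).mp ⟨w, hw0, this⟩
    rwa [Polynomial.IsRoot, hdet]
  · intro hroot
    rw [Polynomial.IsRoot, hdet] at hroot
    obtain ⟨w, hw0, hw⟩ := (Matrix.exists_mulVec_eq_zero_iff).mpr hroot
    refine ⟨w, hw0, ?_⟩
    rw [Matrix.sub_mulVec] at hw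
    have := sub_eq_zero.mp hw
    rw [← this, Matrix.smul_mulVec, Matrix.one_mulVec]
end

section
/- Let D be a division ring, n a positive integer, and φ(z) = zⁿ + c_{n−1}z^{n−1} + ⋯ + c₀ a standard polynomial with coefficients c₀, …, c_{n−1} ∈ D. Let C_φ ∈ Mₙ(D) be the companion matrix of φ. Then an element λ ∈ D satisfies φ(λ) = λⁿ + c_{n−1}λ^{n−1} + ⋯ + c₀ = 0 if and only if λ is a left eigenvalue of C_φ, i.e., there exists a nonzero vector v ∈ Dⁿ with C_φ·v = λ·v. -/
/-- The companion matrix of the standard polynomial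
`φ(z) = zⁿ + c_{n-1} z^{n-1} + ⋯ + c₀` over a division ring `D`:
rows `0, …, n-2` have a `1` in column `i+1` and `0` elsewhere; row `n-1` is
`(-c₀, -c₁, …, -c_{n-1})`. -/
def companionMatrix {D : Type*} [DivisionRing D] {n : ℕ} (c : Fin n → D) :
    Matrix (Fin n) (Fin n) D :=
  Matrix.of fun i j =>
    if (i : ℕ) + 1 = n then -c j
    else if (j : ℕ) = (i : ℕ) + 1 then 1 else 0

lemma companion_row_last {D : Type*} [DivisionRing D] {n : ℕ} (c : Fin n → D)
    (v : Fin n → D) (i : Fin n) (h : (i : ℕ) + 1 = n) :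
    (companionMatrix c).mulVec v i = -∑ j, c j * v j := by
  simp [companionMatrix, Matrix.mulVec, dotProduct, h, neg_mul,
    ← Finset.sum_neg_distrib]

lemma companion_row_mid {D : Type*} [DivisionRing D] {n : ℕ} (c : Fin n → D)
    (v : Fin n → D) (i : Fin n) (h : (i : ℕ) + 1 ≠ n) :
    (companionMatrix c).mulVec v i = v ⟨(i : ℕ) + 1, lt_of_le_of_ne i.isLt h⟩ := by
  set k : Fin n := ⟨(i : ℕ) + 1, lt_of_le_of_ne i.isLt h⟩ with hk
  have : ∀ j : Fin n, ((j : ℕ) = (i : ℕ) + 1) ↔ (j = k) := by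
    intro j; simp [Fin.ext_iff, hk]
  simp only [companionMatrix, Matrix.mulVec, dotProduct, Matrix.of_apply, h, if_false]
  rw [Finset.sum_congr rfl (fun j _ => by rw [if_congr (this j) rfl rfl])]
  simp

/-- Let `D` be a division ring, `n` a positive integer, and
`φ(z) = zⁿ + c_{n-1} z^{n-1} + ⋯ + c₀` a standard polynomial over `D` with companion
matrix `C_φ`.  Then `λ ∈ D` satisfies `φ(λ) = 0` if and only if `λ` is a left
eigenvalue of `C_φ`, i.e. there is a nonzero `v ∈ Dⁿ` with `C_φ·v = λ·v`. -/
theorem root_iff_left_eigenvalue_companion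
    {D : Type*} [DivisionRing D] {n : ℕ} (hn : 0 < n) (c : Fin n → D) (lam : D) :
    lam ^ n + ∑ i : Fin n, c i * lam ^ (i : ℕ) = 0 ↔
      ∃ v : Fin n → D, v ≠ 0 ∧ (companionMatrix c).mulVec v = fun i => lam * v i := by
  constructor
  · intro h
    refine ⟨fun j => lam ^ (j : ℕ), ?_, ?_⟩
    · intro h0
      have := congrFun h0 ⟨0, hn⟩
      simp at this
    · funext i
      by_cases hi : (i : ℕ) + 1 = n
      · rw [companion_row_last c _ i hi]
        have hs : ∑ j : Fin n, c j * lam ^ (j : ℕ) = -lam ^ n :=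
          eq_neg_of_add_eq_zero_right h
        rw [hs, neg_neg]
        show lam ^ n = lam * lam ^ (i : ℕ)
        rw [← pow_succ', hi]
      · rw [companion_row_mid c _ i hi]
        simp [pow_succ']
  · rintro ⟨v, hv, h⟩
    have key : ∀ j, ∀ hj : j < n, v ⟨j, hj⟩ = lam ^ j * v ⟨0, hn⟩ := by
      intro j
      induction j with
      | zero => intro hj; simp
      | succ k ih =>
        intro hj
        have hk : k < n := Nat.lt_of_succ_lt hj
        have hne : ((⟨k, hk⟩ : Fin n) : ℕ) + 1 ≠ n := Nat.ne_of_lt hj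
        have hstep := congrFun h ⟨k, hk⟩
        rw [companion_row_mid c v ⟨k, hk⟩ hne] at hstep
        rw [show (⟨k + 1, hj⟩ : Fin n) = ⟨((⟨k, hk⟩ : Fin n) : ℕ) + 1,
          lt_of_le_of_ne (⟨k, hk⟩ : Fin n).isLt hne⟩ from rfl, hstep, ih hk,
          pow_succ', mul_assoc]
    have h0 : v ⟨0, hn⟩ ≠ 0 := by
      intro h0
      apply hv
      funext j
      have := key j j.isLt
      rw [h0, mul_zero] at this
      simpa using this
    have hm : n - 1 < n := Nat.sub_lt hn one_pos
    have hlasteq : ((⟨n - 1, hm⟩ : Fin n) : ℕ) + 1 = n := Nat.succ_pred_eq_of_pos hn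
    have hlast := congrFun h ⟨n - 1, hm⟩
    rw [companion_row_last c v _ hlasteq] at hlast
    have hsum : ∑ j, c j * v j = (∑ j : Fin n, c j * lam ^ (j : ℕ)) * v ⟨0, hn⟩ := by
      rw [Finset.sum_mul]
      refine Finset.sum_congr rfl fun j _ => ?_
      rw [mul_assoc]
      congr 1
      have := key j j.isLt
      simpa using this
    have hrhs : lam * v ⟨n - 1, hm⟩ = lam ^ n * v ⟨0, hn⟩ := by
      rw [key (n - 1) hm, ← mul_assoc, ← pow_succ', Nat.sub_add_cancel hn]
    rw [hsum, hrhs] at hlast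
    have : (lam ^ n + ∑ j : Fin n, c j * lam ^ (j : ℕ)) * v ⟨0, hn⟩ = 0 := by
      rw [add_mul, ← hlast, neg_add_cancel]
    rcases mul_eq_zero.mp this with h' | h'
    · exact h'
    · exact absurd h' h0
end

section
/- Let D be a division ring and φ(z) = zⁿ + c_{n−1}z^{n−1} + ⋯ + c₀ a standard polynomial over D with companion matrix C_φ ∈ Mₙ(D). Then every left eigenvalue of C_φ is also a right eigenvalue of C_φ: if λ ∈ D and there is a nonzero v ∈ Dⁿ with C_φ·v = λ·v, then there is a nonzero w ∈ Dⁿ with C_φ·w = w·λ. -/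
lemma companion_mulVec_mid {D : Type*} [DivisionRing D] {n : ℕ} (c : Fin n → D)
    (u : Fin n → D) (i : Fin n) (hi : (i : ℕ) + 1 < n) :
    (companionMatrix c).mulVec u i = u ⟨(i : ℕ) + 1, hi⟩ := by
  simp only [companionMatrix, Matrix.mulVec, dotProduct, Matrix.of_apply]
  rw [Finset.sum_eq_single (⟨(i : ℕ) + 1, hi⟩ : Fin n)]
  · simp [Nat.ne_of_lt hi]
  · intro j _ hj
    have hj' : (j : ℕ) ≠ (i : ℕ) + 1 := fun h => hj (Fin.ext h)
    simp [Nat.ne_of_lt hi, hj']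
  · simp

lemma companion_mulVec_last {D : Type*} [DivisionRing D] {n : ℕ} (c : Fin n → D)
    (u : Fin n → D) (i : Fin n) (hi : (i : ℕ) + 1 = n) :
    (companionMatrix c).mulVec u i = -∑ j, c j * u j := by
  simp only [companionMatrix, Matrix.mulVec, dotProduct, Matrix.of_apply, hi,
    if_true, neg_mul, Finset.sum_neg_distrib]

/-- Let `D` be a division ring and `φ(z) = zⁿ + c_{n-1} z^{n-1} + ⋯ + c₀`
a standard polynomial over `D` with companion matrix `C_φ`.  Every left eigenvalue of
`C_φ` is also a right eigenvalue of `C_φ`: if there is a nonzero `v ∈ Dⁿ` with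
`C_φ·v = λ·v`, then there is a nonzero `w ∈ Dⁿ` with `C_φ·w = w·λ`. -/
theorem left_eigenvalue_is_right_eigenvalue
    {D : Type*} [DivisionRing D] {n : ℕ} (c : Fin n → D) (lam : D)
    (h : ∃ v : Fin n → D, v ≠ 0 ∧ (companionMatrix c).mulVec v = fun i => lam * v i) :
    ∃ w : Fin n → D, w ≠ 0 ∧ (companionMatrix c).mulVec w = fun i => w i * lam := by
  obtain ⟨v, hv0, hv⟩ := h
  cases n with
  | zero => exact absurd (funext fun i => i.elim0) hv0
  | succ m =>
    have hstep : ∀ i : Fin (m + 1), v i = lam ^ (i : ℕ) * v 0 := by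
      intro i
      induction i using Fin.induction with
      | zero => simp
      | succ i ih =>
        have hlt : ((i.castSucc : Fin (m+1)) : ℕ) + 1 < m + 1 := by
          simp [i.isLt]
        have := congrFun hv i.castSucc
        rw [companion_mulVec_mid c v i.castSucc hlt] at this
        have hsucc : (⟨((i.castSucc : Fin (m+1)) : ℕ) + 1, hlt⟩ : Fin (m+1)) = i.succ := by
          ext; simp
        rw [hsucc] at this
        rw [this, ih]
        simp only [Fin.coe_castSucc, Fin.val_succ, ← mul_assoc, ← pow_succ']
    have hv00 : v 0 ≠ 0 := by
      intro h0
      apply hv0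
      funext i
      rw [hstep i, h0, mul_zero]
      rfl
    have hlastlt : ((Fin.last m : Fin (m+1)) : ℕ) + 1 = m + 1 := by simp
    have hlast := congrFun hv (Fin.last m)
    rw [companion_mulVec_last c v (Fin.last m) hlastlt] at hlast
    have key : lam ^ (m + 1) + ∑ j : Fin (m+1), c j * lam ^ (j : ℕ) = 0 := by
      have h1 : -∑ j : Fin (m+1), c j * (lam ^ (j:ℕ) * v 0)
          = lam * (lam ^ m * v 0) := by
        calc -∑ j : Fin (m+1), c j * (lam ^ (j:ℕ) * v 0)
            = -∑ j : Fin (m+1), c j * v j := by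
              refine congrArg Neg.neg (Finset.sum_congr rfl fun j _ => ?_)
              rw [hstep j]
          _ = lam * v (Fin.last m) := hlast
          _ = lam * (lam ^ m * v 0) := by rw [hstep (Fin.last m), Fin.val_last]
      have h2 : (lam ^ (m + 1) + ∑ j : Fin (m+1), c j * lam ^ (j : ℕ)) * v 0 = 0 := by
        rw [add_mul, Finset.sum_mul]
        have hc : ∀ j : Fin (m+1), c j * lam ^ (j:ℕ) * v 0 = c j * (lam ^ (j:ℕ) * v 0) := by
          intro j; rw [mul_assoc]
        rw [Finset.sum_congr rfl (fun j _ => hc j)]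
        have hp : lam ^ (m+1) * v 0 = lam * (lam ^ m * v 0) := by
          rw [pow_succ', mul_assoc]
        rw [hp, ← h1]
        exact neg_add_cancel _
      exact (mul_eq_zero.mp h2).resolve_right hv00
    refine ⟨fun i => lam ^ (i : ℕ), ?_, ?_⟩
    · intro h0
      have h1 : (1 : D) = 0 := by simpa using congrFun h0 0
      exact one_ne_zero h1
    · funext i
      by_cases hi : (i : ℕ) + 1 < m + 1
      · rw [companion_mulVec_mid c _ i hi]
        simp [pow_succ]
      · have hieq : (i : ℕ) + 1 = m + 1 := by omega
        rw [companion_mulVec_last c _ i hieq]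
        show -∑ j : Fin (m+1), c j * lam ^ (j:ℕ) = lam ^ (i:ℕ) * lam
        have him : (i : ℕ) = m := by omega
        rw [him, ← pow_succ]
        exact neg_eq_of_add_eq_zero_left key
end

section
/- Let D be a division ring and φ(z) = zⁿ + c_{n−1}z^{n−1} + ⋯ + c₀ a standard polynomial over D with companion matrix C_φ ∈ Mₙ(D). Suppose λ ∈ D and v = (v₀, …, v_{n−1})ᵀ ∈ Dⁿ is a nonzero vector with C_φ·v = v·λ. Then v₀ ≠ 0 and the conjugate λ' = v₀·λ·v₀⁻¹ is a root of φ, i.e., φ(λ') = 0. In particular, every right eigenvalue of C_φ is conjugate to some left eigenvalue of C_φ. -/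
/-- Let `D` be a division ring and `φ(z) = zⁿ + c_{n-1} z^{n-1} + ⋯ + c₀`
a standard polynomial over `D` with companion matrix `C_φ`.  If `λ ∈ D` and
`v = (v₀, …, v_{n-1})ᵀ ∈ Dⁿ` is a nonzero vector with `C_φ·v = v·λ`, then `v₀ ≠ 0` and
the conjugate `λ' = v₀·λ·v₀⁻¹` is a root of `φ`.  In particular, every right eigenvalue
of `C_φ` is conjugate to a left eigenvalue of `C_φ`. -/
theorem right_eigenvalue_conjugate_to_root
    {D : Type*} [DivisionRing D] {n : ℕ} (hn : 0 < n) (c : Fin n → D) (lam : D)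
    (v : Fin n → D) (hv : v ≠ 0)
    (heig : (companionMatrix c).mulVec v = fun i => v i * lam) :
    v ⟨0, hn⟩ ≠ 0 ∧
      (v ⟨0, hn⟩ * lam * (v ⟨0, hn⟩)⁻¹) ^ n +
          ∑ i : Fin n, c i * (v ⟨0, hn⟩ * lam * (v ⟨0, hn⟩)⁻¹) ^ (i : ℕ) = 0 := by
  set v0 := v ⟨0, hn⟩ with hv0
  -- Step 1: v k = v0 * lam ^ k
  have key : ∀ k (hk : k < n), v ⟨k, hk⟩ = v0 * lam ^ k := by
    intro k
    induction k with
    | zero => intro hk; simp [hv0]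
    | succ m ih =>
      intro hk
      have hm : m < n := Nat.lt_of_succ_lt hk
      have hrow := congrFun heig ⟨m, hm⟩
      have hne : ¬ (m + 1 = n) := Nat.ne_of_lt hk
      have hsum : (companionMatrix c).mulVec v ⟨m, hm⟩ = v ⟨m + 1, hk⟩ := by
        simp only [Matrix.mulVec, dotProduct, companionMatrix, Matrix.of_apply,
          hne, if_false]
        rw [Finset.sum_eq_single (⟨m + 1, hk⟩ : Fin n)]
        · simp
        · intro j _ hj
          have : ¬ ((j : ℕ) = m + 1) := by
            intro h; exact hj (Fin.ext h)
          simp [this]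
        · simp
      rw [hsum] at hrow
      rw [hrow, ih hm, pow_succ, mul_assoc]
  -- Step 2: v0 ≠ 0
  have hv0ne : v0 ≠ 0 := by
    intro h0
    apply hv
    funext i
    have := key i i.isLt
    simp only [Fin.eta] at this
    rw [this, h0, zero_mul]
    rfl
  refine ⟨hv0ne, ?_⟩
  -- Step 3: last row relation
  have hlast : (n - 1) < n := Nat.sub_lt hn one_pos
  have hlasteq : n - 1 + 1 = n := Nat.succ_pred_eq_of_pos hn
  have hrow := congrFun heig ⟨n - 1, hlast⟩
  have hsum : (companionMatrix c).mulVec v ⟨n - 1, hlast⟩ = ∑ j, -c j * v j := by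
    simp [Matrix.mulVec, dotProduct, companionMatrix, hlasteq]
  rw [hsum, key (n - 1) hlast] at hrow
  -- hrow : ∑ j, -c j * v j = v0 * lam ^ (n-1) * lam
  have hrel : v0 * lam ^ n + ∑ j, c j * (v0 * lam ^ (j : ℕ)) = 0 := by
    have hvj : ∀ j : Fin n, v j = v0 * lam ^ (j : ℕ) := by
      intro j
      have := key j j.isLt
      simpa using this
    have h1 : ∑ j, -c j * v j = ∑ j, -(c j * (v0 * lam ^ (j : ℕ))) := by
      refine Finset.sum_congr rfl fun j _ => ?_
      rw [hvj j, neg_mul]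
    rw [h1, Finset.sum_neg_distrib] at hrow
    have h2 : v0 * lam ^ (n - 1) * lam = v0 * lam ^ n := by
      rw [mul_assoc, ← pow_succ, hlasteq]
    rw [h2] at hrow
    have hS : ∑ j : Fin n, c j * (v0 * lam ^ (j : ℕ)) = -(v0 * lam ^ n) := by
      rw [← hrow, neg_neg]
    rw [hS, add_neg_cancel]
  -- Step 4: conjugation of powers
  have hconj : ∀ k : ℕ, (v0 * lam * v0⁻¹) ^ k = v0 * lam ^ k * v0⁻¹ := by
    intro k
    induction k with
    | zero => simp [mul_inv_cancel₀ hv0ne]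
    | succ m ih =>
      rw [pow_succ, ih, pow_succ]
      simp only [mul_assoc]
      rw [inv_mul_cancel_left₀ hv0ne]
  rw [hconj n]
  have : ∑ i : Fin n, c i * (v0 * lam * v0⁻¹) ^ (i : ℕ)
      = (∑ i : Fin n, c i * (v0 * lam ^ (i : ℕ))) * v0⁻¹ := by
    rw [Finset.sum_mul]
    refine Finset.sum_congr rfl fun i _ => ?_
    rw [hconj]; simp only [mul_assoc]
  rw [this, ← add_mul, hrel, zero_mul]
end

section
/- Let D be a division ring and K a field with an injective ring homomorphism ι : K → D such that D, as a right K-vector space via right multiplication, is finite-dimensional of dimension d. Let φ(z) = zⁿ + c_{n−1}z^{n−1} + ⋯ + c₀ be a standard polynomial over D with companion matrix C_φ ∈ Mₙ(D). Fix a right K-linear isomorphism g : Dⁿ → K^(nd) and let f(C_φ) ∈ M_{nd}(K) be the matrix (with respect to g) of the right K-linear endomorphism v ↦ C_φ·v of Dⁿ, and let Φ(z) ∈ K[z] be the characteristic polynomial of f(C_φ) (the companion polynomial of φ). Then for every λ ∈ K: if ι(λ) is a root of φ, i.e., ι(λ)ⁿ + c_{n−1}ι(λ)^{n−1} + ⋯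 + c₀ = 0, then Φ(λ) = 0. -/
/-- Let `D` be a division ring and `K` a field with an injective ring
homomorphism `ι : K → D` such that `D`, as a right `K`-vector space via right
multiplication (encoded by a `Module K D` instance with `k • x = x * ι k`), has
dimension `d`.  Let `φ(z) = zⁿ + c_{n-1} z^{n-1} + ⋯ + c₀` be a standard polynomial
over `D` with companion matrix `C_φ`.  Fix a right `K`-linear isomorphism
`g : Dⁿ ≃ K^(nd)` and let `B = f(C_φ)` be the matrix of `v ↦ C_φ·v` with respect to `g`
(i.e. `g (C_φ·v) = B·(g v)` for all `v`), with characteristic polynomial `Φ`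
(the companion polynomial of `φ`).  Then for every `λ ∈ K`:
if `ι λ` is a root of `φ`, then `Φ(λ) = 0`. -/
theorem root_of_standard_poly_is_root_of_companion_poly
    {K D : Type*} [Field K] [DivisionRing D] (ι : K →+* D)
    (hι : Function.Injective ι)
    [Module K D] (hsmul : ∀ (k : K) (x : D), k • x = x * ι k)
    (d : ℕ) (hd : Module.finrank K D = d)
    (n : ℕ) (hn : 0 < n) (c : Fin n → D)
    (g : (Fin n → D) ≃ₗ[K] (Fin (n * d) → K))
    (B : Matrix (Fin (n * d)) (Fin (n * d)) K)
    (hB : ∀ v : Fin n → D, g ((companionMatrix c).mulVec v) = B.mulVec (g v))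
    (lam : K)
    (hroot : (ι lam) ^ n + ∑ i : Fin n, c i * (ι lam) ^ (i : ℕ) = 0) :
    (Matrix.charpoly B).eval lam = 0 := by
  classical
  set μ : D := ι lam with hμ
  set v : Fin n → D := fun i => μ ^ (i : ℕ) with hv
  have hsum : ∑ j : Fin n, c j * μ ^ (j : ℕ) = -(μ ^ n) := by
    have h : μ ^ n + ∑ j : Fin n, c j * μ ^ (j : ℕ) = 0 := hroot
    exact eq_neg_of_add_eq_zero_right h
  -- v is an eigenvector of the companion matrix
  have hCv : (companionMatrix c).mulVec v = lam • v := by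
    funext i
    simp only [Matrix.mulVec, dotProduct, companionMatrix, Matrix.of_apply]
    have hsv : (lam • v) i = μ ^ ((i : ℕ) + 1) := by
      simp [hsmul, hv, pow_succ, hμ]
    rw [hsv]
    by_cases hi : (i : ℕ) + 1 = n
    · simp only [hi, if_true]
      calc ∑ j : Fin n, -c j * v j = -(∑ j : Fin n, c j * μ ^ (j : ℕ)) := by
            simp [hv, neg_mul, Finset.sum_neg_distrib]
        _ = μ ^ n := by rw [hsum, neg_neg]
    · simp only [hi, if_false]
      have hlt : (i : ℕ) + 1 < n := lt_of_le_of_ne i.isLt hi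
      rw [Finset.sum_eq_single (⟨(i : ℕ) + 1, hlt⟩ : Fin n)]
      · simp [hv]
      · intro b _ hb
        have : ¬ ((b : ℕ) = (i : ℕ) + 1) := by
          intro h
          apply hb
          exact Fin.ext h
        simp [this]
      · intro h
        exact absurd (Finset.mem_univ _) h
  -- transfer to K-side
  set w : Fin (n * d) → K := g v with hw
  have hw0 : w ≠ 0 := by
    intro h
    have hv0 : v = 0 := by
      have := congrArg g.symm h
      simpa [hw] using this
    have : v ⟨0, hn⟩ = 0 := by rw [hv0]; rfl
    simp [hv] at this
  have hBw : B.mulVec w = lam • w := by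
    rw [hw, ← hB, hCv, map_smul]
  have hker : ((lam • (1 : Matrix (Fin (n * d)) (Fin (n * d)) K)) - B).mulVec w = 0 := by
    rw [Matrix.sub_mulVec, Matrix.smul_mulVec, Matrix.one_mulVec, hBw, sub_self]
  have hdet : ((lam • (1 : Matrix (Fin (n * d)) (Fin (n * d)) K)) - B).det = 0 := by
    rw [← Matrix.exists_mulVec_eq_zero_iff]
    exact ⟨w, hw0, hker⟩
  -- evaluate charpoly
  have : (Matrix.charpoly B).eval lam
      = ((lam • (1 : Matrix (Fin (n * d)) (Fin (n * d)) K)) - B).det := by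
    rw [Matrix.charpoly, ← Polynomial.coe_evalRingHom, RingHom.map_det]
    congr 1
    ext i j
    by_cases h : i = j <;>
      simp [h, Matrix.charmatrix_apply, Matrix.one_apply, Matrix.diagonal,
        RingHom.mapMatrix_apply, Matrix.sub_apply, Matrix.smul_apply]
  rw [this, hdet]
end

section
/- Let D be a division ring and K a field with an injective ring homomorphism ι : K → D such that D, as a right K-vector space via right multiplication, is finite-dimensional of dimension d. Let φ(z) = zⁿ + c_{n−1}z^{n−1} + ⋯ + c₀ be a standard polynomial over D with companion matrix C_φ ∈ Mₙ(D). Fix a right K-linear isomorphism g : Dⁿ → K^(nd) and let f(C_φ) ∈ M_{nd}(K) be the matrix (with respect to g) of the right K-linear endomorphism v ↦ C_φ·v of Dⁿ, and let Φ(z) ∈ K[z] be the characteristic polynomial of f(C_φ). Then for every λ ∈ K with Φ(λ) = 0, there exists a nonzero q ∈ D such that q·ι(λ)·q⁻¹ is a root of φ; that is, the conjugacy class of ι(λ) in D contains a root of φ. -/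
private lemma conj_pow_aux {D : Type*} [DivisionRing D] (q a : D) (hq : q ≠ 0) (k : ℕ) :
    (q * a * q⁻¹) ^ k = q * a ^ k * q⁻¹ := by
  induction k with
  | zero => simp [mul_inv_cancel₀ hq]
  | succ k ih =>
      rw [pow_succ, ih, pow_succ, ← mul_assoc, mul_assoc (q * a ^ k) q⁻¹ (q * a),
        inv_mul_cancel_left₀ hq, ← mul_assoc, mul_assoc q (a ^ k) a]

/-- Let `D` be a division ring and `K` a field with an injective ring
homomorphism `ι : K → D` such that `D`, as a right `K`-vector space via right
multiplication (encoded by a `Module K D` instance with `k • x = x * ι k`), has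
dimension `d`.  Let `φ(z) = zⁿ + c_{n-1} z^{n-1} + ⋯ + c₀` be a standard polynomial
over `D` with companion matrix `C_φ`.  Fix a right `K`-linear isomorphism
`g : Dⁿ ≃ K^(nd)` and let `B = f(C_φ)` be the matrix of `v ↦ C_φ·v` with respect to `g`
(i.e. `g (C_φ·v) = B·(g v)` for all `v`), with characteristic polynomial `Φ`.
Then for every `λ ∈ K` with `Φ(λ) = 0` there is a nonzero `q ∈ D` such that
`q·(ι λ)·q⁻¹` is a root of `φ`: the conjugacy class of `ι λ` contains a root of `φ`. -/
theorem conjugacy_class_of_root_of_companion_poly_contains_root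
    {K D : Type*} [Field K] [DivisionRing D] (ι : K →+* D)
    (hι : Function.Injective ι)
    [Module K D] (hsmul : ∀ (k : K) (x : D), k • x = x * ι k)
    (d : ℕ) (hd : Module.finrank K D = d)
    (n : ℕ) (hn : 0 < n) (c : Fin n → D)
    (g : (Fin n → D) ≃ₗ[K] (Fin (n * d) → K))
    (B : Matrix (Fin (n * d)) (Fin (n * d)) K)
    (hB : ∀ v : Fin n → D, g ((companionMatrix c).mulVec v) = B.mulVec (g v))
    (lam : K)
    (hroot : (Matrix.charpoly B).eval lam = 0) :
    ∃ q : D, q ≠ 0 ∧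
      (q * ι lam * q⁻¹) ^ n + ∑ i : Fin n, c i * (q * ι lam * q⁻¹) ^ (i : ℕ) = 0 := by
  classical
  -- Step 1: det (lam • 1 - B) = 0
  have hdet : (lam • (1 : Matrix (Fin (n * d)) (Fin (n * d)) K) - B).det = 0 := by
    have : ((Polynomial.evalRingHom lam).mapMatrix (Matrix.charmatrix B)).det = 0 := by
      rw [← RingHom.map_det]
      simpa [Matrix.charpoly] using hroot
    convert this using 2
    ext i j
    by_cases h : i = j
    · subst h
      simp [Matrix.charmatrix_apply_eq, Matrix.smul_apply, Matrix.one_apply]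
    · simp [Matrix.charmatrix_apply_ne _ _ _ h, Matrix.smul_apply, Matrix.one_apply_ne h,
        Matrix.sub_apply]
  -- Step 2: get nonzero eigenvector w of B
  obtain ⟨w, hw0, hw⟩ :=
    (Matrix.exists_mulVec_eq_zero_iff.mpr hdet)
  have hBw : B.mulVec w = lam • w := by
    have := hw
    rw [Matrix.sub_mulVec, sub_eq_zero] at this
    rw [← this, Matrix.smul_mulVec, Matrix.one_mulVec]
  -- Step 3: pull back to v in D^n
  set v : Fin n → D := g.symm w with hv
  have hv0 : v ≠ 0 := by
    intro h
    apply hw0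
    have := congrArg g h
    simpa [hv] using this
  have hCv : (companionMatrix c).mulVec v = lam • v := by
    apply g.injective
    rw [hB, map_smul]
    simp [hv, hBw]
  -- rows of the eigenvector equation
  have hrow : ∀ i : Fin n, ((companionMatrix c).mulVec v) i = v i * ι lam := by
    intro i
    rw [hCv]
    simp [Pi.smul_apply, hsmul]
  -- mulVec at non-last rows
  have hstep : ∀ (i : Fin n) (hi : (i : ℕ) + 1 < n), v ⟨(i : ℕ) + 1, hi⟩ = v i * ι lam := by
    intro i hi
    have h := hrow i
    rw [Matrix.mulVec] at h
    have hne : (i : ℕ) + 1 ≠ n := Nat.ne_of_lt hi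
    calc v ⟨(i : ℕ) + 1, hi⟩
        = ∑ j : Fin n, (companionMatrix c) i j * v j := by
          rw [Finset.sum_eq_single (⟨(i : ℕ) + 1, hi⟩ : Fin n)]
          · simp [companionMatrix, hne]
          · intro j _ hj
            have : (j : ℕ) ≠ (i : ℕ) + 1 := by
              intro hc; apply hj; exact Fin.ext hc
            simp [companionMatrix, hne, this]
          · simp
      _ = v i * ι lam := h
  -- mulVec at last row
  have hlast : (-∑ j : Fin n, c j * v j) = v ⟨n - 1, by omega⟩ * ι lam := by
    have h := hrow ⟨n - 1, by omega⟩
    rw [Matrix.mulVec] at h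
    have heq : ((⟨n - 1, by omega⟩ : Fin n) : ℕ) + 1 = n := by simp; omega
    calc (-∑ j : Fin n, c j * v j)
        = ∑ j : Fin n, (companionMatrix c) ⟨n - 1, by omega⟩ j * v j := by
          rw [← Finset.sum_neg_distrib]
          refine Finset.sum_congr rfl fun j _ => ?_
          simp [companionMatrix, heq]
      _ = _ := h
  -- v i = v 0 * (ι lam)^i
  have hpow : ∀ k : ℕ, ∀ hk : k < n, v ⟨k, hk⟩ = v ⟨0, hn⟩ * (ι lam) ^ k := by
    intro k
    induction k with
    | zero => intro hk; simp
    | succ k ih =>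
        intro hk
        have hk' : k < n := by omega
        have := hstep ⟨k, hk'⟩ hk
        rw [this, ih hk', pow_succ, mul_assoc]
  set q : D := v ⟨0, hn⟩ with hq
  have hq0 : q ≠ 0 := by
    intro h
    apply hv0
    funext i
    have : v i = q * ι lam ^ (i : ℕ) := by simpa using hpow (i : ℕ) i.isLt
    simp [this, h]
  refine ⟨q, hq0, ?_⟩
  -- translate hlast into the polynomial identity
  have key : q * (ι lam) ^ n + ∑ j : Fin n, c j * (q * (ι lam) ^ (j : ℕ)) = 0 := by
    have h1 : v ⟨n - 1, by omega⟩ * ι lam = q * (ι lam) ^ n := by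
      rw [hpow (n - 1) (by omega), mul_assoc, ← pow_succ]
      congr 2
      omega
    have h2 : ∀ j : Fin n, v j = q * (ι lam) ^ (j : ℕ) := by
      intro j
      have := hpow (j : ℕ) j.isLt
      simpa using this
    have := hlast
    rw [h1] at this
    rw [← this]
    simp [h2]
  have conj : ∀ k : ℕ, (q * ι lam * q⁻¹) ^ k = q * (ι lam) ^ k * q⁻¹ :=
    conj_pow_aux q (ι lam) hq0
  calc (q * ι lam * q⁻¹) ^ n + ∑ i : Fin n, c i * (q * ι lam * q⁻¹) ^ (i : ℕ)
      = (q * (ι lam) ^ n + ∑ j : Fin n, c j * (q * (ι lam) ^ (j : ℕ))) * q⁻¹ := by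
        rw [add_mul, Finset.sum_mul]
        simp only [conj]
        simp [mul_assoc]
    _ = 0 := by rw [key, zero_mul]
end

section
/- Let D be a division ring with center F, let t, n ∈ F, and let λ ∈ D satisfy λ² = t·λ − n. Let φ(z) = zᵐ + c_{m−1}z^{m−1} + ⋯ + c₀ be a standard polynomial over D, and define ψ₁ = P_m + Σ_{i=0}^{m−1} c_i·P_i and ψ₀ = Q_m + Σ_{i=0}^{m−1} c_i·Q_i, where P₀ = 0, Q₀ = 1, P_{k+1} = t·P_k + Q_k, Q_{k+1} = −n·P_k. Suppose ψ₁ = 0 and some conjugate of λ is a root of φ (i.e., φ(q·λ·q⁻¹) = 0 for some nonzero q ∈ D). Then every conjugate of λ is a root of φ: φ(q·λ·q⁻¹) = 0 for all nonzero q ∈ D. -/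
/-- Let `D` be a division ring with center `F`, let `t, s ∈ F`
(`s` is the element called `n` in the source), and let `λ ∈ D` satisfy `λ² = t·λ − s`.
Let `φ(z) = zᵐ + c_{m-1} z^{m-1} + ⋯ + c₀` be a standard polynomial over `D`, and define
`ψ₁ = P m + Σ_{i<m} c_i·P i` where `P 0 = 0`, `Q 0 = 1`, `P (k+1) = t·P k + Q k`,
`Q (k+1) = −s·P k` (sequences of central elements).  If `ψ₁ = 0` and some conjugate of
`λ` is a root of `φ`, then every conjugate of `λ` is a root of `φ`. -/
theorem every_conjugate_is_root_of_psi_one_eq_zero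
    {D : Type*} [DivisionRing D] (t s : D)
    (ht : t ∈ Set.center D) (hs : s ∈ Set.center D)
    (lam : D) (hlam : lam ^ 2 = t * lam - s)
    (P Q : ℕ → D)
    (hPmem : ∀ k, P k ∈ Set.center D) (hQmem : ∀ k, Q k ∈ Set.center D)
    (hP0 : P 0 = 0) (hQ0 : Q 0 = 1)
    (hP : ∀ k, P (k + 1) = t * P k + Q k)
    (hQ : ∀ k, Q (k + 1) = -s * P k)
    (m : ℕ) (c : Fin m → D)
    (hψ₁ : P m + ∑ i : Fin m, c i * P i = 0)
    (hexists : ∃ q : D, q ≠ 0 ∧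
      (q * lam * q⁻¹) ^ m + ∑ i : Fin m, c i * (q * lam * q⁻¹) ^ (i : ℕ) = 0) :
    ∀ q : D, q ≠ 0 →
      (q * lam * q⁻¹) ^ m + ∑ i : Fin m, c i * (q * lam * q⁻¹) ^ (i : ℕ) = 0 := by
  have htc := Set.mem_center_iff.mp ht
  have hsc := Set.mem_center_iff.mp hs
  -- λ^k = P k * λ + Q k
  have hpow : ∀ k, lam ^ k = P k * lam + Q k := by
    intro k
    induction k with
    | zero => simp [hP0, hQ0]
    | succ k ih =>
      rw [pow_succ, ih, add_mul, mul_assoc, ← pow_two, hlam, hP, hQ]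
      rw [mul_sub, ← mul_assoc, (htc.comm (P k)).symm, mul_assoc,
        (hsc.comm (P k)).symm]
      noncomm_ring
  -- conjugate power formula
  have hconjpow : ∀ q : D, q ≠ 0 → ∀ k, (q * lam * q⁻¹) ^ k = q * lam ^ k * q⁻¹ := by
    intro q hq k
    induction k with
    | zero => simp [mul_inv_cancel₀ hq]
    | succ k ih =>
      rw [pow_succ, ih, pow_succ]
      simp [mul_assoc, inv_mul_cancel_left₀ hq]
  -- key: value of φ at any conjugate is Q m + Σ c i * Q i
  have key : ∀ q : D, q ≠ 0 →
      (q * lam * q⁻¹) ^ m + ∑ i : Fin m, c i * (q * lam * q⁻¹) ^ (i : ℕ)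
        = Q m + ∑ i : Fin m, c i * Q i := by
    intro q hq
    have hconj : ∀ k, (q * lam * q⁻¹) ^ k = P k * (q * lam * q⁻¹) + Q k := by
      intro k
      have hPq : q * P k = P k * q := ((Set.mem_center_iff.mp (hPmem k)).comm q).symm
      have hQq : q * Q k = Q k * q := ((Set.mem_center_iff.mp (hQmem k)).comm q).symm
      rw [hconjpow q hq k, hpow k, mul_add, add_mul,
        ← mul_assoc q (P k) lam, hPq, hQq, mul_assoc (Q k), mul_inv_cancel₀ hq,
        mul_one, mul_assoc, mul_assoc, mul_assoc]
    set x := q * lam * q⁻¹ with hx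
    calc x ^ m + ∑ i : Fin m, c i * x ^ (i : ℕ)
        = P m * x + Q m + ∑ i : Fin m, (c i * P i * x + c i * Q i) := by
          rw [hconj m]
          congr 1
          apply Finset.sum_congr rfl
          intro i _
          rw [hconj i]; noncomm_ring
      _ = (P m + ∑ i : Fin m, c i * P i) * x + (Q m + ∑ i : Fin m, c i * Q i) := by
          rw [Finset.sum_add_distrib, add_mul, Finset.sum_mul]
          noncomm_ring
      _ = Q m + ∑ i : Fin m, c i * Q i := by rw [hψ₁, zero_mul, zero_add]
  obtain ⟨q₀, hq₀, hroot⟩ := hexists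
  intro q hq
  rw [key q hq, ← key q₀ hq₀, hroot]
end

section
/- Let D be a division ring with center F and let t, n ∈ F. Let φ(z) = zᵐ + c_{m−1}z^{m−1} + ⋯ + c₀ be a standard polynomial over D, and define ψ₁ = P_m + Σ_{i=0}^{m−1} c_i·P_i and ψ₀ = Q_m + Σ_{i=0}^{m−1} c_i·Q_i, where P₀ = 0, Q₀ = 1, P_{k+1} = t·P_k + Q_k, Q_{k+1} = −n·P_k. Suppose ψ₁ ≠ 0. Then for every μ ∈ D satisfying μ² = t·μ − n, μ is a root of φ if and only if μ = −ψ₁⁻¹·ψ₀. In particular, φ has at most one root among the elements of D satisfying the quadratic relation z² = t·z − n. -/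
/-- Let `D` be a division ring with center `F` and `t, s ∈ F`
(`s` is the element called `n` in the source).  Let `φ(z) = zᵐ + c_{m-1} z^{m-1} + ⋯ + c₀`
be a standard polynomial over `D`, and define `ψ₁ = P m + Σ_{i<m} c_i·P i` and
`ψ₀ = Q m + Σ_{i<m} c_i·Q i`, where `P 0 = 0`, `Q 0 = 1`, `P (k+1) = t·P k + Q k`,
`Q (k+1) = −s·P k` (sequences of central elements).  Suppose `ψ₁ ≠ 0`.  Then for every
`μ ∈ D` with `μ² = t·μ − s`, `μ` is a root of `φ` if and only if `μ = −ψ₁⁻¹·ψ₀`;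
in particular `φ` has at most one root among the elements satisfying `z² = t·z − s`. -/
theorem unique_root_of_psi_one_ne_zero
    {D : Type*} [DivisionRing D] (t s : D)
    (ht : t ∈ Set.center D) (hs : s ∈ Set.center D)
    (P Q : ℕ → D)
    (hPmem : ∀ k, P k ∈ Set.center D) (hQmem : ∀ k, Q k ∈ Set.center D)
    (hP0 : P 0 = 0) (hQ0 : Q 0 = 1)
    (hP : ∀ k, P (k + 1) = t * P k + Q k)
    (hQ : ∀ k, Q (k + 1) = -s * P k)
    (m : ℕ) (c : Fin m → D)
    (hψ₁ : P m + ∑ i : Fin m, c i * P i ≠ 0) :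
    ∀ μ : D, μ ^ 2 = t * μ - s →
      (μ ^ m + ∑ i : Fin m, c i * μ ^ (i : ℕ) = 0 ↔
        μ = -(P m + ∑ i : Fin m, c i * P i)⁻¹ * (Q m + ∑ i : Fin m, c i * Q i)) := by
  intro μ hμ
  -- key: μ^k = P k * μ + Q k
  have key : ∀ k, μ ^ k = P k * μ + Q k := by
    intro k
    induction k with
    | zero => simp [hP0, hQ0]
    | succ k ih =>
      have hcomm : P k * μ = μ * P k := (Set.mem_center_iff.mp (hPmem k)).comm μ
      have h2 : μ ^ 2 = μ * μ := sq μ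
      calc μ ^ (k + 1) = μ ^ k * μ := pow_succ μ k
        _ = (P k * μ + Q k) * μ := by rw [ih]
        _ = P k * (μ * μ) + Q k * μ := by rw [add_mul, mul_assoc]
        _ = P k * (t * μ - s) + Q k * μ := by rw [← h2, hμ]
        _ = (t * P k + Q k) * μ + -s * P k := by
            have hPt : P k * t = t * P k := (Set.mem_center_iff.mp (hPmem k)).comm t
            have hPs : P k * s = s * P k := (Set.mem_center_iff.mp (hPmem k)).comm s
            rw [mul_sub, ← mul_assoc, hPt, add_mul, hPs]
            noncomm_ring
        _ = P (k + 1) * μ + Q (k + 1) := by rw [hP k, hQ k]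
  have expand : μ ^ m + ∑ i : Fin m, c i * μ ^ (i : ℕ)
      = (P m + ∑ i : Fin m, c i * P i) * μ + (Q m + ∑ i : Fin m, c i * Q i) := by
    rw [key m]
    have : ∀ i : Fin m, c i * μ ^ (i : ℕ) = c i * P i * μ + c i * Q i := by
      intro i; rw [key i, mul_add, mul_assoc]
    rw [Finset.sum_congr rfl fun i _ => this i, Finset.sum_add_distrib, add_mul,
      Finset.sum_mul]
    noncomm_ring
  set ψ₁ := P m + ∑ i : Fin m, c i * P i
  set ψ₀ := Q m + ∑ i : Fin m, c i * Q i
  rw [expand]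
  constructor
  · intro h
    have : ψ₁ * μ = -ψ₀ := eq_neg_of_add_eq_zero_left h
    have := congrArg (ψ₁⁻¹ * ·) this
    simpa [← mul_assoc, inv_mul_cancel₀ hψ₁] using this
  · intro h
    rw [h]
    rw [neg_mul, mul_neg, ← mul_assoc, mul_inv_cancel₀ hψ₁, one_mul, neg_add_cancel]
end
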